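/- Let t_1,...,t_n each be uniformly distributed on a finite vocabulary V with |V| ≥ 2, let E be a random variable, and let f be any estimator outputting a tuple in V^n. With P_rec = (1/n)Σ_{i=1}^n P[f(E)_i = t_i], the average token-level mutual information satisfies (1/n)Σ_{i=1}^n I(t_i;E) ≥ P_rec·log(|V|−1) − H_b(P_rec). -/

import Mathlib

/-!
Fano's inequality bounds each conditional entropy: `H(tᵢ | E) ≤ H_b(pᵢ) + (1 - pᵢ) log(|V| - 1)`,
where `pᵢ` is the probability that the `i`-th coordinate of `f(E)` recovers `tᵢ`. On each fibre
`E = e` this is the grouping identity for the event `{tᵢ = fᵢ(e)}` plus the maximum-entropy bound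
for the remaining `|V| - 1` values, and Jensen for the concave `H_b` over the fibres. Since `tᵢ` is
uniform, `I(tᵢ; E) = log |V| - H(tᵢ | E) ≥ pᵢ log(|V| - 1) - H_b(pᵢ)`, and averaging over `i`
with Jensen once more moves the average inside `H_b`.
-/

open Real Finset
open scoped Classical BigOperators

/-- Probability of an event under a pmf `μ` on a finite sample space. -/
noncomputable def pr {Ω : Type*} [Fintype Ω] (μ : Ω → ℝ) (s : Set Ω) : ℝ :=
  ∑ ω, if ω ∈ s then μ ω else 0

/-- `μ` is a probability mass function on the finite sample space `Ω`. -/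
def IsPMF {Ω : Type*} [Fintype Ω] (μ : Ω → ℝ) : Prop :=
  (∀ ω, 0 ≤ μ ω) ∧ ∑ ω, μ ω = 1

/-- Shannon entropy of a discrete random variable `X`. -/
noncomputable def ent {Ω α : Type*} [Fintype Ω] [Fintype α] (μ : Ω → ℝ) (X : Ω → α) : ℝ :=
  ∑ a, Real.negMulLog (pr μ {ω | X ω = a})

/-- Conditional Shannon entropy `H(X|Y) = H(X,Y) - H(Y)`. -/
noncomputable def condEnt {Ω α β : Type*} [Fintype Ω] [Fintype α] [Fintype β]
    (μ : Ω → ℝ) (X : Ω → α) (Y : Ω → β) : ℝ :=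
  ent μ (fun ω => (X ω, Y ω)) - ent μ Y

/-- Mutual information `I(X;Y) = H(X) - H(X|Y)`. -/
noncomputable def mutualInfo {Ω α β : Type*} [Fintype Ω] [Fintype α] [Fintype β]
    (μ : Ω → ℝ) (X : Ω → α) (Y : Ω → β) : ℝ :=
  ent μ X - condEnt μ X Y

lemma ConcaveOn.le_map_uniform_average {D : Set ℝ} {φ : ℝ → ℝ} (hφ : ConcaveOn ℝ D φ) {ι : Type*}
    {S : Finset ι} (hS : S.Nonempty) {a : ι → ℝ} (ha : ∀ i ∈ S, a i ∈ D) :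
    (#S : ℝ)⁻¹ * ∑ i ∈ S, φ (a i) ≤ φ ((#S : ℝ)⁻¹ * ∑ i ∈ S, a i) := by
  have hk : (#S : ℝ) ≠ 0 := by exact_mod_cast hS.card_ne_zero
  simpa only [smul_eq_mul, ← mul_sum] using
    hφ.le_map_sum (w := fun _ => (#S : ℝ)⁻¹) (fun _ _ => by positivity)
      (by rw [sum_const, nsmul_eq_mul]; field_simp) ha

lemma sum_negMulLog_le {ι : Type*} (S : Finset ι) {a : ι → ℝ} (ha : ∀ i ∈ S, 0 ≤ a i) :
    ∑ i ∈ S, negMulLog (a i) ≤ negMulLog (∑ i ∈ S, a i) + (∑ i ∈ S, a i) * log #S := by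
  rcases S.eq_empty_or_nonempty with rfl | hS
  · simp
  have hk : (0 : ℝ) < #S := by exact_mod_cast hS.card_pos
  have hJensen := concaveOn_negMulLog.le_map_uniform_average hS ha
  rw [negMulLog_mul, negMulLog, log_inv] at hJensen
  have := mul_le_mul_of_nonneg_left hJensen hk.le
  field_simp at this
  linarith

lemma mul_binEntropy_div_eq {s b : ℝ} (hb : 0 ≤ b) (hbs : b ≤ s) :
    s * binEntropy (b / s) = negMulLog b + negMulLog (s - b) - negMulLog s := by
  rcases hb.eq_or_lt with rfl | hb
  · simp
  rcases hbs.eq_or_lt with rfl | hbs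
  · simp [div_self hb.ne']
  have hs : 0 < s := hb.trans hbs
  rw [binEntropy_eq_negMulLog_add_negMulLog_one_sub, one_sub_div hs.ne']
  simp only [negMulLog]
  rw [log_div hb.ne' hs.ne', log_div (sub_pos.2 hbs).ne' hs.ne']
  field_simp
  ring

lemma sum_mul_binEntropy_div_le {ι : Type*} (S : Finset ι) {s b : ι → ℝ}
    (hb : ∀ i ∈ S, 0 ≤ b i) (hbs : ∀ i ∈ S, b i ≤ s i) (hs : ∑ i ∈ S, s i = 1) :
    ∑ i ∈ S, s i * binEntropy (b i / s i) ≤ binEntropy (∑ i ∈ S, b i) := by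
  have hs₀ : ∀ i ∈ S, 0 ≤ s i := fun i hi => (hb i hi).trans (hbs i hi)
  have hcancel : ∀ i ∈ S, s i * (b i / s i) = b i := fun i hi =>
    mul_div_cancel_of_imp' fun h => le_antisymm (h ▸ hbs i hi) (hb i hi)
  rw [← sum_congr rfl hcancel]
  exact strictConcave_binEntropy.concaveOn.le_map_sum hs₀ hs fun i hi =>
    ⟨div_nonneg (hb i hi) (hs₀ i hi), div_le_one_of_le₀ (hbs i hi) (hs₀ i hi)⟩

/-- Fano's inequality on one fibre: `j` is the unnormalised conditional law, `a₀` the guess. -/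
lemma sum_negMulLog_sub_negMulLog_sum_le {α : Type*} [Fintype α] {j : α → ℝ}
    (hj : ∀ a, 0 ≤ j a) (a₀ : α) :
    ∑ a, negMulLog (j a) - negMulLog (∑ a, j a) ≤
      (∑ a, j a) * binEntropy (j a₀ / ∑ a, j a)
        + (∑ a, j a - j a₀) * log (Fintype.card α - 1) := by
  have hcard : (#(univ.erase a₀) : ℝ) = Fintype.card α - 1 := by
    rw [card_erase_of_mem (mem_univ a₀), card_univ,
      Nat.cast_pred (Fintype.card_pos_iff.2 ⟨a₀⟩)]
  have hrest : ∑ a ∈ univ.erase a₀, j a = ∑ a, j a - j a₀ := by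
    rw [← add_sum_erase _ _ (mem_univ a₀)]
    ring
  have hmax := sum_negMulLog_le (univ.erase a₀) fun a _ => hj a
  rw [hrest, hcard] at hmax
  rw [← add_sum_erase _ _ (mem_univ a₀),
    mul_binEntropy_div_eq (hj a₀) (single_le_sum (fun a _ => hj a) (mem_univ a₀))]
  linarith

section Discrete

variable {Ω α β : Type*} [Fintype Ω] [Fintype α] [Fintype β] {μ : Ω → ℝ}

lemma pr_nonneg (hμ : IsPMF μ) (s : Set Ω) : 0 ≤ pr μ s :=
  sum_nonneg fun ω _ => by split_ifs <;> simp [hμ.1 ω]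

lemma pr_le_one (hμ : IsPMF μ) (s : Set Ω) : pr μ s ≤ 1 :=
  hμ.2 ▸ sum_le_sum fun ω _ => by split_ifs <;> simp [hμ.1 ω]

lemma pr_eq_sum_pr_inter (s : Set Ω) (Y : Ω → β) :
    pr μ s = ∑ b, pr μ {ω | Y ω = b ∧ ω ∈ s} := by
  unfold pr
  rw [sum_comm]
  refine sum_congr rfl fun ω _ => ?_
  rw [sum_eq_single (Y ω) (fun b _ hb => by simp [Ne.symm hb]) (by simp)]
  simp

lemma sum_pr_eq_one (hμ : IsPMF μ) (Y : Ω → β) : ∑ b, pr μ {ω | Y ω = b} = 1 := by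
  simpa [pr, hμ.2] using (pr_eq_sum_pr_inter (μ := μ) Set.univ Y).symm

lemma condEnt_eq_sum (X : Ω → α) (Y : Ω → β) :
    condEnt μ X Y = ∑ b, (∑ a, negMulLog (pr μ {ω | X ω = a ∧ Y ω = b})
      - negMulLog (pr μ {ω | Y ω = b})) := by
  simp only [condEnt, ent, Fintype.sum_prod_type, Prod.mk.injEq, sum_sub_distrib]
  rw [sum_comm]

theorem condEnt_le_binEntropy_add (hμ : IsPMF μ) (X : Ω → α) (Y : Ω → β) (g : β → α) :
    condEnt μ X Y ≤ binEntropy (pr μ {ω | g (Y ω) = X ω})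
      + (1 - pr μ {ω | g (Y ω) = X ω}) * log (Fintype.card α - 1) := by
  set j : α → β → ℝ := fun a b => pr μ {ω | X ω = a ∧ Y ω = b}
  set s : β → ℝ := fun b => pr μ {ω | Y ω = b}
  set p := pr μ {ω | g (Y ω) = X ω}
  have hj : ∀ a b, 0 ≤ j a b := fun a b => pr_nonneg hμ _
  have hs : ∀ b, s b = ∑ a, j a b := fun b => pr_eq_sum_pr_inter _ X
  have hp : p = ∑ b, j (g b) b := by
    refine (pr_eq_sum_pr_inter _ Y).trans ?_
    refine sum_congr rfl fun b _ => congrArg (pr μ) (Set.ext fun ω => ?_)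
    grind
  have hfibre : ∀ b, ∑ a, negMulLog (j a b) - negMulLog (s b) ≤
      s b * binEntropy (j (g b) b / s b) + (s b - j (g b) b) * log (Fintype.card α - 1) := by
    intro b
    simpa only [← hs] using sum_negMulLog_sub_negMulLog_sum_le (hj · b) (g b)
  calc condEnt μ X Y = ∑ b, (∑ a, negMulLog (j a b) - negMulLog (s b)) := condEnt_eq_sum X Y
    _ ≤ ∑ b, (s b * binEntropy (j (g b) b / s b)
          + (s b - j (g b) b) * log (Fintype.card α - 1)) := sum_le_sum fun b _ => hfibre b
    _ = ∑ b, s b * binEntropy (j (g b) b / s b) + (1 - p) * log (Fintype.card α - 1) := by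
      rw [sum_add_distrib, ← sum_mul, sum_sub_distrib, sum_pr_eq_one hμ Y, hp]
    _ ≤ binEntropy p + (1 - p) * log (Fintype.card α - 1) := by
      gcongr
      rw [hp]
      exact sum_mul_binEntropy_div_le _ (fun b _ => hj _ b)
        (fun b _ => hs b ▸ single_le_sum (fun a _ => hj a b) (mem_univ _)) (sum_pr_eq_one hμ Y)

lemma ent_eq_log_card_of_uniform {X : Ω → α}
    (hX : ∀ a, pr μ {ω | X ω = a} = 1 / Fintype.card α) :
    ent μ X = log (Fintype.card α) := by
  simp only [ent, hX, sum_const, card_univ, nsmul_eq_mul, negMulLog, one_div, log_inv]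
  rcases eq_or_ne (Fintype.card α : ℝ) 0 with h | h
  · simp [h]
  · field_simp

theorem mul_log_sub_binEntropy_le_mutualInfo (hμ : IsPMF μ) (hα : 2 ≤ Fintype.card α)
    {X : Ω → α} (hX : ∀ a, pr μ {ω | X ω = a} = 1 / Fintype.card α) (Y : Ω → β) (g : β → α) :
    pr μ {ω | g (Y ω) = X ω} * log (Fintype.card α - 1) - binEntropy (pr μ {ω | g (Y ω) = X ω})
      ≤ mutualInfo μ X Y := by
  have hα' : (2 : ℝ) ≤ Fintype.card α := by exact_mod_cast hα
  have hlog : log (Fintype.card α - 1) ≤ log (Fintype.card α) :=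
    log_le_log (by linarith) (by linarith)
  have hFano := condEnt_le_binEntropy_add hμ X Y g
  rw [mutualInfo, ent_eq_log_card_of_uniform hX]
  linarith

end Discrete

/-- Token-level recoverability bound: with
`P_rec = (1/n)Σ_i P[f(E)_i = t_i]`, the average token-level MI satisfies
`(1/n)Σ_i I(t_i;E) ≥ P_rec·log(|V|−1) − H_b(P_rec)`. -/
theorem avg_mi_ge_recoverability_bound {Ω V F : Type*} [Fintype Ω] [Fintype V] [Fintype F]
    {n : ℕ} (hn : 0 < n) (μ : Ω → ℝ) (hμ : IsPMF μ) (hV : 2 ≤ Fintype.card V)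
    (t : Fin n → Ω → V)
    (hunif : ∀ i, ∀ v : V, pr μ {ω | t i ω = v} = 1 / Fintype.card V)
    (E : Ω → F) (f : F → (Fin n → V)) :
    (1 / (n : ℝ)) * ∑ i, mutualInfo μ (t i) E ≥
      ((1 / (n : ℝ)) * ∑ i, pr μ {ω | f (E ω) i = t i ω}) * Real.log (Fintype.card V - 1)
        - Real.binEntropy ((1 / (n : ℝ)) * ∑ i, pr μ {ω | f (E ω) i = t i ω}) := by
  set p : Fin n → ℝ := fun i => pr μ {ω | f (E ω) i = t i ω}
  set L := log (Fintype.card V - 1)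
  have hFano : ∀ i, p i * L - binEntropy (p i) ≤ mutualInfo μ (t i) E := fun i =>
    mul_log_sub_binEntropy_le_mutualInfo hμ hV (hunif i) E (fun e => f e i)
  have hJensen :
      (1 / (n : ℝ)) * ∑ i, binEntropy (p i) ≤ binEntropy ((1 / (n : ℝ)) * ∑ i, p i) := by
    simpa only [card_univ, Fintype.card_fin, one_div] using
      strictConcave_binEntropy.concaveOn.le_map_uniform_average
        (univ_nonempty_iff.2 (Fin.pos_iff_nonempty.1 hn))
        fun i _ => ⟨pr_nonneg hμ _, pr_le_one hμ _⟩
  calc ((1 / (n : ℝ)) * ∑ i, p i) * L - binEntropy ((1 / (n : ℝ)) * ∑ i, p i)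
      ≤ ((1 / (n : ℝ)) * ∑ i, p i) * L - (1 / (n : ℝ)) * ∑ i, binEntropy (p i) := by linarith
    _ = (1 / (n : ℝ)) * ∑ i, (p i * L - binEntropy (p i)) := by
      rw [sum_sub_distrib, ← sum_mul]; ring
    _ ≤ (1 / (n : ℝ)) * ∑ i, mutualInfo μ (t i) E := by gcongr with i; exact hFano i
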